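/- For every additively indecomposable ordinal γ, every tree Q with rank(Q) = γ, and every subset A of λ(γ), Q has an A-contraction. -/

import Mathlib

open Ordinal Set

universe u

/-- The set of maximal elements ("leaves") of `P`. -/
def treeLeaves {α : Type u} [PartialOrder α] (P : Set α) : Set α :=
  {t ∈ P | ∀ s ∈ P, ¬ t < s}

/-- The derivative `P' = P \ Leaves P`. -/
def treeDeriv {α : Type u} [PartialOrder α] (P : Set α) : Set α :=
  P \ treeLeaves P

/-- The transfinite iterated derivative `P^ξ`. -/
noncomputable def derivIter {α : Type u} [PartialOrder α] (P : Set α) (ξ : Ordinal.{u}) :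
    Set α :=
  Ordinal.limitRecOn ξ P (fun _ ih => treeDeriv ih)
    (fun o _ ih => ⋂ (ζ : Set.Iio o), ih ζ.1 ζ.2)

/-- `P` is a tree: every ancestor set is well-ordered (a well-founded chain). -/
def IsTree {α : Type u} [PartialOrder α] (P : Set α) : Prop :=
  ∀ t ∈ P, IsChain (· ≤ ·) {s ∈ P | s ≤ t} ∧ {s ∈ P | s ≤ t}.WellFoundedOn (· < ·)

/-- `P` is well-founded: some transfinite derivative is empty. -/
def IsWFTree {α : Type u} [PartialOrder α] (P : Set α) : Prop :=
  ∃ ξ : Ordinal.{u}, derivIter P ξ = ∅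

/-- The rank of a well-founded tree: the least `ξ` with `P^ξ = ∅`. -/
noncomputable def treeRank {α : Type u} [PartialOrder α] (P : Set α) : Ordinal.{u} :=
  sInf {ξ | derivIter P ξ = ∅}

/-- `τ_P(t)`: the largest ordinal `ξ` with `t ∈ P^ξ`. -/
noncomputable def treeTau {α : Type u} [PartialOrder α] (P : Set α) (t : α) : Ordinal.{u} :=
  sSup {ξ | t ∈ derivIter P ξ}

/-- `τ_{P,β}(t)`: the largest ordinal `ξ` with `t ∈ P^{β·ξ}`. -/
noncomputable def treeTauMul {α : Type u} [PartialOrder α] (P : Set α) (β : Ordinal.{u})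
    (t : α) : Ordinal.{u} :=
  sSup {ξ | t ∈ derivIter P (β * ξ)}

/-- `alpProd ε i = ω^{ω^{ε 0}} · ⋯ · ω^{ω^{ε i}}`. -/
noncomputable def alpProd (ε : ℕ → Ordinal.{u}) : ℕ → Ordinal.{u}
  | 0 => omega0 ^ omega0 ^ ε 0
  | (i + 1) => alpProd ε i * omega0 ^ omega0 ^ ε (i + 1)

/-- The separation function `ς_P` of a tree whose rank has decomposition
`ω^{ω^{ε 0}} ⋯ ω^{ω^{ε l}}`: the least `i` such that `s, t` lie in the same block
`P^{α_i·δ} \ P^{α_i·(δ+1)}` for some ordinal `δ`. -/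
noncomputable def sep {α : Type u} [PartialOrder α] (P : Set α) (ε : ℕ → Ordinal.{u})
    (s t : α) : ℕ :=
  sInf {i : ℕ | ∃ δ : Ordinal.{u},
    s ∈ derivIter P (alpProd ε i * δ) \ derivIter P (alpProd ε i * (δ + 1)) ∧
    t ∈ derivIter P (alpProd ε i * δ) \ derivIter P (alpProd ε i * (δ + 1))}

/-- `indProd ε A l = ω^{ω^{ε 0}·1_A(0)} ⋯ ω^{ω^{ε l}·1_A(l)}`. -/
noncomputable def indProd (ε : ℕ → Ordinal.{u}) (A : Set ℕ) : ℕ → Ordinal.{u}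
  | 0 => omega0 ^ (omega0 ^ ε 0 * A.indicator (fun _ => (1 : Ordinal.{u})) 0)
  | (i + 1) => indProd ε A i *
      omega0 ^ (omega0 ^ ε (i + 1) * A.indicator (fun _ => (1 : Ordinal.{u})) (i + 1))

/-- `sumPow ε i = ω^{ε 0} + ⋯ + ω^{ε (i-1)}` (the partial sums `γ_i`). -/
noncomputable def sumPow (ε : ℕ → Ordinal.{u}) : ℕ → Ordinal.{u}
  | 0 => 0
  | (i + 1) => sumPow ε i + omega0 ^ ε i

/-- `indSum ε A i = Σ_{n < i} 1_A(n)·ω^{ε n}`. -/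
noncomputable def indSum (ε : ℕ → Ordinal.{u}) (A : Set ℕ) : ℕ → Ordinal.{u}
  | 0 => 0
  | (i + 1) => indSum ε A i + A.indicator (fun _ => (1 : Ordinal.{u})) i * omega0 ^ ε i


/-!
The height `τ_P t` (`treeTau`) of an element of a well-founded tree satisfies
`t ∈ P^ξ ↔ ξ ≤ τ_P t`, so `ς_P(s, t)` is the least `i` with `τ_P s / α_i = τ_P t / α_i`,
and everything reduces to ordinal arithmetic.

If `g` is strictly increasing on `ρ` with values below `rank P`, the elements of `P` whose height
lies in `g '' ρ` form a subtree of rank `ρ`, in which the height of `t` is `g⁻¹ (τ_P t)`: every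
element of `P` of height `g ξ + 1` or more has an extension of height exactly `g ξ`. With
`g = id` and `ρ = 1` this gives the `∅`-contraction. For an `A`-contraction take for `g` the map
that writes `ζ < ω^{ω^{ε_{a(0)}}} ⋯ ω^{ω^{ε_{a(q)}}}` in the mixed radix of these factors and
moves its `j`-th digit to position `a(j)` of the radix `α_0, α_1, …`; two ordinals then agree
above position `a(j)` exactly when their preimages agree above position `j`.
-/

section Derivatives

variable {α : Type u} [PartialOrder α] {P Z : Set α} {s t : α} {ξ ζ η ρ : Ordinal.{u}}

theorem mem_treeDeriv : t ∈ treeDeriv Z ↔ t ∈ Z ∧ ∃ s ∈ Z, t < s := by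
  simp [treeDeriv, treeLeaves]

theorem derivIter_zero (P : Set α) : derivIter P 0 = P :=
  limitRecOn_zero _ _ _

theorem mem_derivIter_add_one :
    t ∈ derivIter P (ξ + 1) ↔ t ∈ derivIter P ξ ∧ ∃ s ∈ derivIter P ξ, t < s := by
  rw [derivIter, limitRecOn_add_one, mem_treeDeriv]
  rfl

theorem mem_derivIter_of_isSuccLimit (hξ : Order.IsSuccLimit ξ) :
    t ∈ derivIter P ξ ↔ ∀ ζ < ξ, t ∈ derivIter P ζ := by
  rw [derivIter, limitRecOn_limit _ _ _ _ hξ]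
  simp [derivIter]

theorem derivIter_antitone (P : Set α) : Antitone (derivIter P) := by
  intro ζ ξ h
  induction ξ using limitRecOn with
  | zero => rw [nonpos_iff_eq_zero.1 h]
  | add_one ξ ih =>
    rcases h.lt_or_eq with h | rfl
    · exact fun t ht => ih (Order.lt_add_one_iff.1 h) (mem_derivIter_add_one.1 ht).1
    · rfl
  | limit ξ hξ =>
    rcases h.lt_or_eq with h | rfl
    · exact fun t ht => (mem_derivIter_of_isSuccLimit hξ).1 ht ζ h
    · rfl

theorem derivIter_subset (P : Set α) (ξ : Ordinal.{u}) : derivIter P ξ ⊆ P :=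
  (derivIter_antitone P (zero_le : 0 ≤ ξ)).trans (derivIter_zero P).le

theorem mem_derivIter_of_lt (hs : s ∈ P) (hst : s < t) (ht : t ∈ derivIter P ξ) :
    s ∈ derivIter P ξ := by
  induction ξ using limitRecOn with
  | zero => rwa [derivIter_zero]
  | add_one ξ ih =>
    obtain ⟨ht, u, hu, htu⟩ := mem_derivIter_add_one.1 ht
    exact mem_derivIter_add_one.2 ⟨ih ht, u, hu, hst.trans htu⟩
  | limit ξ hξ ih =>
    rw [mem_derivIter_of_isSuccLimit hξ] at ht ⊢
    exact fun ζ hζ => ih ζ hζ (ht ζ hζ)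

theorem mem_derivIter_add_one_of_lt (hs : s ∈ P) (hst : s < t) (ht : t ∈ derivIter P ξ) :
    s ∈ derivIter P (ξ + 1) :=
  mem_derivIter_add_one.2 ⟨mem_derivIter_of_lt hs hst ht, t, ht, hst⟩

theorem subset_derivIter_of_forall_exists_gt (hZ : Z ⊆ P) (h : ∀ z ∈ Z, ∃ z' ∈ Z, z < z') :
    Z ⊆ derivIter P ξ := by
  induction ξ using limitRecOn with
  | zero => rwa [derivIter_zero]
  | add_one ξ ih =>
    intro z hz
    obtain ⟨z', hz', hzz'⟩ := h z hz
    exact mem_derivIter_add_one.2 ⟨ih hz, z', ih hz', hzz'⟩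
  | limit ξ hξ ih =>
    exact fun z hz => (mem_derivIter_of_isSuccLimit hξ).2 fun ζ hζ => ih ζ hζ hz

theorem treeRank_eq_of_derivIter (h : derivIter P ρ = ∅)
    (hne : ∀ ξ < ρ, (derivIter P ξ).Nonempty) : treeRank P = ρ :=
  (csInf_le' (s := {ξ | derivIter P ξ = ∅}) h).antisymm <|
    le_csInf ⟨ρ, h⟩ fun _ hξ => not_lt.1 fun hlt => (hne _ hlt).ne_empty hξ

theorem derivIter_nonempty_of_lt_treeRank (h : ξ < treeRank P) : (derivIter P ξ).Nonempty :=
  nonempty_iff_ne_empty.2 fun he => (csInf_le' (s := {ξ | derivIter P ξ = ∅}) he).not_gt h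

end Derivatives

section Height

variable {α : Type u} [PartialOrder α] {P : Set α} {s t : α} {ξ η : Ordinal.{u}}

theorem lt_treeRank_of_mem (hWF : IsWFTree P) (ht : t ∈ derivIter P ξ) : ξ < treeRank P :=
  not_le.1 fun h => (csInf_mem hWF : derivIter P (treeRank P) = ∅).subset
    (derivIter_antitone P h ht)

theorem eq_empty_of_forall_exists_gt (hWF : IsWFTree P) {Z : Set α} (hZ : Z ⊆ P)
    (h : ∀ z ∈ Z, ∃ z' ∈ Z, z < z') : Z = ∅ := by
  obtain ⟨ξ, hξ⟩ := hWF
  exact subset_empty_iff.1 (hξ ▸ subset_derivIter_of_forall_exists_gt hZ h)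

theorem mem_derivIter_iff_le_treeTau (hWF : IsWFTree P) (ht : t ∈ P) :
    t ∈ derivIter P ξ ↔ ξ ≤ treeTau P t := by
  have hbdd : BddAbove {ξ | t ∈ derivIter P ξ} :=
    ⟨treeRank P, fun _ hξ => (lt_treeRank_of_mem hWF hξ).le⟩
  have hne : {ξ | t ∈ derivIter P ξ}.Nonempty := ⟨0, show t ∈ derivIter P 0 by rwa [derivIter_zero]⟩
  suffices t ∈ derivIter P (treeTau P t) from
    ⟨fun h => le_csSup hbdd h, fun h => derivIter_antitone P h this⟩
  rcases zero_or_succ_or_isSuccLimit (treeTau P t) with h | ⟨η, hη⟩ | h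
  · rwa [h, derivIter_zero]
  · obtain ⟨ξ, hξ, hηξ⟩ := exists_lt_of_lt_csSup hne (hη ▸ Order.lt_succ η : η < treeTau P t)
    exact derivIter_antitone P (hη ▸ Order.succ_le_of_lt hηξ) hξ
  · refine (mem_derivIter_of_isSuccLimit h).2 fun ζ hζ => ?_
    obtain ⟨ξ, hξ, hζξ⟩ := exists_lt_of_lt_csSup hne hζ
    exact derivIter_antitone P hζξ.le hξ

theorem treeTau_lt_treeTau (hWF : IsWFTree P) (hs : s ∈ P) (ht : t ∈ P) (hst : s < t) :
    treeTau P t < treeTau P s :=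
  Order.add_one_le_iff.1 <| (mem_derivIter_iff_le_treeTau hWF hs).1 <|
    mem_derivIter_add_one_of_lt hs hst ((mem_derivIter_iff_le_treeTau hWF ht).2 le_rfl)

theorem treeTau_eq_iff (hWF : IsWFTree P) (ht : t ∈ P) :
    treeTau P t = η ↔ t ∈ derivIter P η ∧ t ∉ derivIter P (η + 1) := by
  rw [mem_derivIter_iff_le_treeTau hWF ht, mem_derivIter_iff_le_treeTau hWF ht, not_le,
    Order.lt_add_one_iff, le_antisymm_iff, and_comm]

theorem exists_gt_treeTau_eq (hWF : IsWFTree P) (ht : t ∈ derivIter P (η + 1)) :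
    ∃ s ∈ P, t < s ∧ treeTau P s = η := by
  by_contra! h
  have hup : ∀ s ∈ derivIter P η, t < s → s ∈ derivIter P (η + 1) := fun s hs hts =>
    have hsP := derivIter_subset P η hs
    by_contra fun hs' => h s hsP hts ((treeTau_eq_iff hWF hsP).2 ⟨hs, hs'⟩)
  have hZ : {s ∈ derivIter P (η + 1) | t < s} = ∅ := by
    refine eq_empty_of_forall_exists_gt hWF (fun s hs => derivIter_subset P _ hs.1) ?_
    rintro s ⟨hs, hts⟩
    obtain ⟨-, s', hs', hss'⟩ := mem_derivIter_add_one.1 hs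
    exact ⟨s', ⟨hup s' hs' (hts.trans hss'), hts.trans hss'⟩, hss'⟩
  obtain ⟨-, s, hs, hts⟩ := mem_derivIter_add_one.1 ht
  exact hZ.subset ⟨hup s hs hts, hts⟩

theorem exists_treeTau_eq (hWF : IsWFTree P) (h : η < treeRank P) :
    ∃ t ∈ P, treeTau P t = η := by
  obtain ⟨t, ht⟩ := derivIter_nonempty_of_lt_treeRank h
  by_cases ht' : t ∈ derivIter P (η + 1)
  · obtain ⟨s, hs, -, hsη⟩ := exists_gt_treeTau_eq hWF ht'
    exact ⟨s, hs, hsη⟩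
  · exact ⟨t, derivIter_subset P η ht, (treeTau_eq_iff hWF (derivIter_subset P η ht)).2 ⟨ht, ht'⟩⟩

end Height

section LevelSubtree

variable {α : Type u} [PartialOrder α] {P : Set α} {g : Ordinal.{u} → Ordinal.{u}}
  {t : α} {ξ ζ ρ : Ordinal.{u}}

def levelSubtree (P : Set α) (g : Ordinal.{u} → Ordinal.{u}) (ρ : Ordinal.{u}) : Set α :=
  {t ∈ P | ∃ ζ < ρ, treeTau P t = g ζ}

theorem mem_derivIter_levelSubtree_iff (hWF : IsWFTree P) (hg : StrictMonoOn g (Iio ρ))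
    (ht : t ∈ P) (hζ : ζ < ρ) (htζ : treeTau P t = g ζ) :
    t ∈ derivIter (levelSubtree P g ρ) ξ ↔ ξ ≤ ζ := by
  induction ξ using limitRecOn generalizing t ζ with
  | zero => simpa [derivIter_zero] using ⟨ht, ζ, hζ, htζ⟩
  | add_one ξ ih =>
    rw [mem_derivIter_add_one, ih ht hζ htζ, Order.add_one_le_iff]
    constructor
    · rintro ⟨hξζ, s, hs, hts⟩
      obtain ⟨hsP, ζ', hζ', hsζ'⟩ := derivIter_subset _ ξ hs
      have : g ζ' < g ζ := hsζ' ▸ htζ ▸ treeTau_lt_treeTau hWF ht hsP hts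
      exact ((ih hsP hζ' hsζ').1 hs).trans_lt ((hg.lt_iff_lt hζ' hζ).1 this)
    · intro hξζ
      have hξ : ξ < ρ := hξζ.trans hζ
      have : t ∈ derivIter P (g ξ + 1) := (mem_derivIter_iff_le_treeTau hWF ht).2
        (htζ ▸ Order.add_one_le_iff.2 (hg hξ hζ hξζ))
      obtain ⟨s, hs, hts, hsξ⟩ := exists_gt_treeTau_eq hWF this
      exact ⟨hξζ.le, s, (ih hs hξ hsξ).2 le_rfl, hts⟩
  | limit ξ hξ ih =>
    rw [mem_derivIter_of_isSuccLimit hξ, hξ.le_iff_forall_le]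
    exact forall₂_congr fun ξ' hξ' => ih ξ' hξ' ht hζ htζ

theorem treeRank_levelSubtree (hWF : IsWFTree P) (hg : StrictMonoOn g (Iio ρ))
    (hgP : ∀ ζ < ρ, g ζ < treeRank P) : treeRank (levelSubtree P g ρ) = ρ := by
  refine treeRank_eq_of_derivIter (eq_empty_iff_forall_notMem.2 fun t ht => ?_) fun ξ hξ => ?_
  · obtain ⟨htP, ζ, hζ, htζ⟩ := derivIter_subset _ ρ ht
    exact ((mem_derivIter_levelSubtree_iff hWF hg htP hζ htζ).1 ht).not_gt hζ
  · obtain ⟨t, ht, htξ⟩ := exists_treeTau_eq hWF (hgP ξ hξ)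
    exact ⟨t, (mem_derivIter_levelSubtree_iff hWF hg ht hξ htξ).2 le_rfl⟩

end LevelSubtree

namespace Ordinal

variable {p b c δ δ' x x' : Ordinal.{u}}

theorem mul_add_lt_mul_of_lt (hx : x < p) (h : δ < δ') : p * δ + x < p * δ' :=
  calc p * δ + x < p * δ + p := by gcongr
    _ = p * (δ + 1) := (mul_add_one p δ).symm
    _ ≤ p * δ' := by gcongr; exact Order.add_one_le_iff.2 h

theorem mul_add_lt_mul_add_iff (hx : x < p) (hx' : x' < p) :
    p * δ + x < p * δ' + x' ↔ δ < δ' ∨ δ = δ' ∧ x < x' := by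
  constructor
  · intro h
    rcases lt_trichotomy δ δ' with hδ | rfl | hδ
    · exact .inl hδ
    · exact .inr ⟨rfl, (add_lt_add_iff_left _).1 h⟩
    · exact absurd h ((mul_add_lt_mul_of_lt hx' hδ).trans_le le_self_add).not_gt
  · rintro (h | ⟨rfl, h⟩)
    · exact (mul_add_lt_mul_of_lt hx h).trans_le le_self_add
    · exact (add_lt_add_iff_left _).2 h

theorem mul_add_eq_mul_add_iff (hx : x < p) (hx' : x' < p) :
    p * δ + x = p * δ' + x' ↔ δ = δ' ∧ x = x' := by
  refine ⟨fun h => ?_, fun ⟨hδ, hx⟩ => hδ ▸ hx ▸ rfl⟩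
  have hquot : ∀ {δ x}, x < p → (p * δ + x) / p = δ := fun {δ x} hx => by
    rw [mul_add_div δ hx.ne_bot x, div_eq_zero_of_lt hx, add_zero]
  obtain rfl : δ = δ' := by simpa only [hquot hx, hquot hx'] using congrArg (· / p) h
  exact ⟨rfl, add_left_cancel h⟩

theorem mul_add_div_eq_mul_add_div_iff (hbc : b ∣ c) (hx : x < c) (hx' : x' < c) :
    (c * δ + x) / b = (c * δ' + x') / b ↔ δ = δ' ∧ x / b = x' / b := by
  obtain ⟨d, rfl⟩ := hbc
  have hb : b ≠ 0 := by rintro rfl; simp at hx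
  rw [mul_assoc, mul_assoc, mul_add_div _ hb, mul_add_div _ hb]
  exact mul_add_eq_mul_add_iff ((lt_mul_iff_div_lt hb).1 hx) ((lt_mul_iff_div_lt hb).1 hx')

end Ordinal

section Products

variable (ε : ℕ → Ordinal.{u}) {i j n : ℕ}

theorem alpProd_ne_zero : ∀ i, alpProd ε i ≠ 0
  | 0 => opow_ne_zero _ omega0_ne_zero
  | i + 1 => mul_ne_zero (alpProd_ne_zero i) (opow_ne_zero _ omega0_ne_zero)

theorem alpProd_dvd_alpProd (h : i ≤ j) : alpProd ε i ∣ alpProd ε j := by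
  induction j, h using Nat.le_induction with
  | base => rfl
  | succ j _ ih => exact dvd_mul_of_dvd_left ih _

theorem alpProd_le_alpProd (h : i ≤ j) : alpProd ε i ≤ alpProd ε j :=
  le_of_dvd (alpProd_ne_zero ε j) (alpProd_dvd_alpProd ε h)

/-- `α_{n-1}`, with `α_{-1} = 1`. -/
noncomputable def alpProdBelow : ℕ → Ordinal.{u}
  | 0 => 1
  | n + 1 => alpProd ε n

theorem alpProdBelow_mul (n : ℕ) : alpProdBelow ε n * omega0 ^ omega0 ^ ε n = alpProd ε n := by
  cases n <;> simp [alpProdBelow, alpProd]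

theorem alpProdBelow_ne_zero : ∀ n, alpProdBelow ε n ≠ 0
  | 0 => one_ne_zero
  | n + 1 => alpProd_ne_zero ε n

theorem alpProd_dvd_alpProdBelow (h : i < n) : alpProd ε i ∣ alpProdBelow ε n := by
  obtain ⟨n, rfl⟩ := Nat.exists_eq_add_of_lt h
  exact alpProd_dvd_alpProd ε (by omega)

theorem alpProd_le_alpProdBelow (h : i < n) : alpProd ε i ≤ alpProdBelow ε n :=
  le_of_dvd (alpProdBelow_ne_zero ε n) (alpProd_dvd_alpProdBelow ε h)

end Products

/-- Reads `ζ < ω^{ω^{ε (a 0)}} ⋯ ω^{ω^{ε (a q)}}` in the mixed radix of these factors and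
multiplies its `j`-th digit by `α_{a j - 1}` instead. -/
noncomputable def spreadDigits (ε : ℕ → Ordinal.{u}) (a : ℕ → ℕ) : ℕ → Ordinal.{u} → Ordinal.{u}
  | 0 => fun ζ => alpProdBelow ε (a 0) * ζ
  | q + 1 => fun ζ => alpProdBelow ε (a (q + 1)) * (ζ / alpProd (fun i => ε (a i)) q)
      + spreadDigits ε a q (ζ % alpProd (fun i => ε (a i)) q)

section SpreadDigits

variable {ε : ℕ → Ordinal.{u}} {a : ℕ → ℕ} {q i : ℕ} {ζ ζ' : Ordinal.{u}}

theorem spreadDigits_lt (ha : ∀ i < q, a i < a (i + 1))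
    (hζ : ζ < alpProd (fun i => ε (a i)) q) : spreadDigits ε a q ζ < alpProd ε (a q) := by
  induction q generalizing ζ with
  | zero =>
    rw [spreadDigits, ← alpProdBelow_mul]
    exact mul_lt_mul_of_pos_left hζ (pos_iff_ne_zero.2 (alpProdBelow_ne_zero ε _))
  | succ q ih =>
    have hB := alpProd_ne_zero (fun i => ε (a i)) q
    have hr := (ih (fun i hi => ha i (by omega)) (mod_lt ζ hB)).trans_le
      (alpProd_le_alpProdBelow ε (ha q q.lt_succ_self))
    exact (mul_add_lt_mul_of_lt hr ((lt_mul_iff_div_lt hB).1 hζ)).trans_eq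
      (alpProdBelow_mul ε _)

theorem spreadDigits_mod_lt (ha : ∀ i < q + 1, a i < a (i + 1)) (ζ : Ordinal.{u}) :
    spreadDigits ε a q (ζ % alpProd (fun i => ε (a i)) q) < alpProdBelow ε (a (q + 1)) :=
  (spreadDigits_lt (fun i hi => ha i (by omega)) (mod_lt ζ (alpProd_ne_zero _ q))).trans_le
    (alpProd_le_alpProdBelow ε (ha q q.lt_succ_self))

theorem spreadDigits_strictMonoOn (ha : ∀ i < q, a i < a (i + 1)) :
    StrictMonoOn (spreadDigits ε a q) (Iio (alpProd (fun i => ε (a i)) q)) := by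
  induction q with
  | zero =>
    exact fun ζ _ ζ' _ h => mul_lt_mul_of_pos_left h (pos_iff_ne_zero.2 (alpProdBelow_ne_zero ε _))
  | succ q ih =>
    intro ζ _ ζ' _ h
    set B := alpProd (fun i => ε (a i)) q
    have hB : B ≠ 0 := alpProd_ne_zero _ q
    have hdigits := (mul_add_lt_mul_add_iff (mod_lt ζ hB) (mod_lt ζ' hB)).1
      (by rwa [div_add_mod, div_add_mod])
    refine (mul_add_lt_mul_add_iff (spreadDigits_mod_lt ha ζ) (spreadDigits_mod_lt ha ζ')).2
      (hdigits.imp_right (And.imp_right ?_))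
    exact ih (fun i hi => ha i (by omega)) (mod_lt ζ hB) (mod_lt ζ' hB)

theorem spreadDigits_div_eq_iff_of_le (ha : ∀ i < q, a i < a (i + 1))
    (hζ : ζ < alpProd (fun i => ε (a i)) q) (hζ' : ζ' < alpProd (fun i => ε (a i)) q)
    (hi : a q ≤ i) :
    spreadDigits ε a q ζ / alpProd ε i = spreadDigits ε a q ζ' / alpProd ε i ↔
      ∃ j ≤ q, a j ≤ i ∧
        ζ / alpProd (fun i => ε (a i)) j = ζ' / alpProd (fun i => ε (a i)) j := by
  have hlt := fun {ζ} (hζ : ζ < _) => (spreadDigits_lt ha hζ).trans_le (alpProd_le_alpProd ε hi)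
  refine iff_of_true ?_ ⟨q, le_rfl, hi, by rw [div_eq_zero_of_lt hζ, div_eq_zero_of_lt hζ']⟩
  rw [div_eq_zero_of_lt (hlt hζ), div_eq_zero_of_lt (hlt hζ')]

theorem spreadDigits_div_eq_iff (ha : ∀ i < q, a i < a (i + 1))
    (hζ : ζ < alpProd (fun i => ε (a i)) q) (hζ' : ζ' < alpProd (fun i => ε (a i)) q)
    (hne : ζ ≠ ζ') (i : ℕ) :
    spreadDigits ε a q ζ / alpProd ε i = spreadDigits ε a q ζ' / alpProd ε i ↔
      ∃ j ≤ q, a j ≤ i ∧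
        ζ / alpProd (fun i => ε (a i)) j = ζ' / alpProd (fun i => ε (a i)) j := by
  induction q generalizing ζ ζ' with
  | zero =>
    rcases le_or_gt (a 0) i with hi | hi
    · exact spreadDigits_div_eq_iff_of_le ha hζ hζ' hi
    have hpos := pos_iff_ne_zero.2 (alpProdBelow_ne_zero ε (a 0))
    refine iff_of_false (fun h => hne ?_) ?_
    · exact ((Ordinal.mul_add_div_eq_mul_add_div_iff (alpProd_dvd_alpProdBelow ε hi) hpos hpos).1
        (by simpa [spreadDigits] using h)).1
    · rintro ⟨j, hj, hji, -⟩
      obtain rfl := Nat.le_zero.1 hj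
      exact hi.not_ge hji
  | succ q ih =>
    rcases le_or_gt (a (q + 1)) i with hi | hi
    · exact spreadDigits_div_eq_iff_of_le ha hζ hζ' hi
    set B := alpProd (fun i => ε (a i))
    have hB : B q ≠ 0 := alpProd_ne_zero _ q
    have ha' : ∀ i < q, a i < a (i + 1) := fun i hi => ha i (by omega)
    have hQ : ∀ j ≤ q, ζ / B j = ζ' / B j ↔ ζ / B q = ζ' / B q ∧ ζ % B q / B j = ζ' % B q / B j :=
      fun j hj => by
        conv_lhs => rw [← div_add_mod ζ (B q), ← div_add_mod ζ' (B q)]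
        exact Ordinal.mul_add_div_eq_mul_add_div_iff (alpProd_dvd_alpProd _ hj)
          (mod_lt ζ hB) (mod_lt ζ' hB)
    have hRHS : (∃ j ≤ q + 1, a j ≤ i ∧ ζ / B j = ζ' / B j) ↔
        ζ / B q = ζ' / B q ∧ ∃ j ≤ q, a j ≤ i ∧ ζ % B q / B j = ζ' % B q / B j := by
      constructor
      · rintro ⟨j, hj, hji, h⟩
        have hjq : j ≤ q := Nat.le_of_lt_succ (hj.lt_of_ne fun h => hi.not_ge (h ▸ hji))
        obtain ⟨hδ, h⟩ := (hQ j hjq).1 h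
        exact ⟨hδ, j, hjq, hji, h⟩
      · rintro ⟨hδ, j, hj, hji, h⟩
        exact ⟨j, hj.trans q.le_succ, hji, (hQ j hj).2 ⟨hδ, h⟩⟩
    simp only [spreadDigits]
    rw [Ordinal.mul_add_div_eq_mul_add_div_iff
      (alpProd_dvd_alpProdBelow ε hi)
      (spreadDigits_mod_lt ha ζ) (spreadDigits_mod_lt ha ζ'), hRHS]
    refine and_congr_right fun hδ => ih ha' (mod_lt ζ hB) (mod_lt ζ' hB) fun h => hne ?_
    rw [← div_add_mod ζ (B q), ← div_add_mod ζ' (B q), hδ, h]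

end SpreadDigits

theorem sInf_eq_apply_sInf_of_mem_iff {S T : Set ℕ} {f : ℕ → ℕ} {q : ℕ}
    (hf : MonotoneOn f (Iic q)) (hq : q ∈ T) (hST : ∀ i, i ∈ S ↔ ∃ j ≤ q, f j ≤ i ∧ j ∈ T) :
    sInf S = f (sInf T) := by
  have hT : sInf T ≤ q := Nat.sInf_le hq
  have hmem : f (sInf T) ∈ S := (hST _).2 ⟨_, hT, le_rfl, Nat.sInf_mem ⟨q, hq⟩⟩
  obtain ⟨j, hj, hji, hjT⟩ := (hST _).1 (Nat.sInf_mem ⟨_, hmem⟩)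
  exact (Nat.sInf_le hmem).antisymm ((hf hT hj (Nat.sInf_le hjT)).trans hji)

section Contraction

variable {α : Type u} [PartialOrder α] {P : Set α} {s t : α}

theorem mem_derivIter_mul_diff_iff {x b δ : Ordinal.{u}} (hb : b ≠ 0)
    (ht : ∀ ξ, t ∈ derivIter P ξ ↔ ξ ≤ x) :
    t ∈ derivIter P (b * δ) \ derivIter P (b * (δ + 1)) ↔ x / b = δ := by
  rw [mem_sdiff, ht, ht, not_le, div_eq_iff hb]

theorem sep_eq_sInf_div (ε : ℕ → Ordinal.{u}) {x y : Ordinal.{u}}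
    (hs : ∀ ξ, s ∈ derivIter P ξ ↔ ξ ≤ x) (ht : ∀ ξ, t ∈ derivIter P ξ ↔ ξ ≤ y) :
    sep P ε s t = sInf {i | x / alpProd ε i = y / alpProd ε i} := by
  simp only [sep, mem_derivIter_mul_diff_iff (alpProd_ne_zero ε _) hs,
    mem_derivIter_mul_diff_iff (alpProd_ne_zero ε _) ht]
  congr! 3 with i
  exact ⟨fun ⟨_, hx, hy⟩ => hx.trans hy.symm, fun h => ⟨_, h, rfl⟩⟩

theorem exists_treeRank_eq_one (hWF : IsWFTree P) (hP : treeRank P ≠ 0) :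
    ∃ Q ⊆ P, treeRank Q = 1 :=
  ⟨levelSubtree P id 1, sep_subset _ _, treeRank_levelSubtree hWF (strictMono_id.strictMonoOn _)
    fun ζ hζ => by rwa [Order.lt_one_iff.1 hζ, id, pos_iff_ne_zero]⟩

theorem exists_contraction (hWF : IsWFTree P) {ε : ℕ → Ordinal.{u}} {q : ℕ} {a : ℕ → ℕ}
    (ha : ∀ i < q, a i < a (i + 1)) (hP : alpProd ε (a q) ≤ treeRank P) :
    ∃ Q ⊆ P, treeRank Q = alpProd (fun i => ε (a i)) q ∧
      ∀ s ∈ Q, ∀ t ∈ Q, s < t → sep P ε s t = a (sep Q (fun i => ε (a i)) s t) := by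
  have hg := spreadDigits_strictMonoOn (ε := ε) ha
  refine ⟨levelSubtree P (spreadDigits ε a q) _, sep_subset _ _, treeRank_levelSubtree hWF hg
    fun ζ hζ => (spreadDigits_lt ha hζ).trans_le hP, ?_⟩
  rintro s ⟨hs, ζ, hζ, hsζ⟩ t ⟨ht, ζ', hζ', htζ'⟩ hst
  have hne : ζ ≠ ζ' := by
    rintro rfl
    exact (treeTau_lt_treeTau hWF hs ht hst).ne (htζ'.trans hsζ.symm)
  rw [sep_eq_sInf_div ε (x := spreadDigits ε a q ζ) (y := spreadDigits ε a q ζ')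
      (hsζ ▸ fun _ => mem_derivIter_iff_le_treeTau hWF hs)
      (htζ' ▸ fun _ => mem_derivIter_iff_le_treeTau hWF ht),
    sep_eq_sInf_div _ (fun _ => mem_derivIter_levelSubtree_iff hWF hg hs hζ hsζ)
      (fun _ => mem_derivIter_levelSubtree_iff hWF hg ht hζ' htζ')]
  exact sInf_eq_apply_sInf_of_mem_iff (strictMonoOn_Iic_of_lt_succ ha).monotoneOn
    (show ζ / _ = ζ' / _ by rw [div_eq_zero_of_lt hζ, div_eq_zero_of_lt hζ'])
    (spreadDigits_div_eq_iff ha hζ hζ' hne)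

end Contraction

theorem statement17_general {α : Type u} [PartialOrder α] (γ : Ordinal.{u})
    (hγ : ∃ ξ : Ordinal.{u}, γ = omega0 ^ ξ) (P : Set α)
    (hWF : IsWFTree P) (hrank : treeRank P = γ) :
    (∃ Q ⊆ P, treeRank Q = 1) ∧
    (∀ (l : ℕ) (ε : ℕ → Ordinal.{u}), (∀ i < l, ε (i + 1) ≤ ε i) →
      γ = alpProd ε l →
      ∀ (q : ℕ) (a : ℕ → ℕ), (∀ i < q, a i < a (i + 1)) → a q ≤ l →
        ∃ Q ⊆ P, treeRank Q = alpProd (fun i => ε (a i)) q ∧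
          ∀ s ∈ Q, ∀ t ∈ Q, s < t →
            sep P ε s t = a (sep Q (fun i => ε (a i)) s t)) := by
  obtain ⟨ξ, rfl⟩ := hγ
  refine ⟨exists_treeRank_eq_one hWF (hrank ▸ opow_ne_zero ξ omega0_ne_zero),
    fun l ε _ hl q a ha hal => exists_contraction hWF ha ?_⟩
  rw [hrank, hl]
  exact alpProd_le_alpProd ε hal

/-- every tree `P` whose rank is an additively indecomposable
ordinal `γ` admits an `A`-contraction for every `A ⊆ λ(γ)`: a rank-one subtree when
`A = ∅`, and, when `γ = ω^{ω^{ε_0}}⋯ω^{ω^{ε_l}}` and `A = {a(0) < … < a(q)} ⊆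
{0,…,l}`, a subtree `Q` with `rank(Q) = ω^{ω^{ε_{a(0)}}}⋯ω^{ω^{ε_{a(q)}}}` and
`ς_P(s,t) = a(ς_Q(s,t))` for all pairs of `Q`. -/
theorem statement17 {α : Type u} [PartialOrder α] (γ : Ordinal.{u})
    (hγ : ∃ ξ : Ordinal.{u}, γ = omega0 ^ ξ) (P : Set α) (hP : IsTree P)
    (hWF : IsWFTree P) (hrank : treeRank P = γ) :
    (∃ Q ⊆ P, treeRank Q = 1) ∧
    (∀ (l : ℕ) (ε : ℕ → Ordinal.{u}), (∀ i < l, ε (i + 1) ≤ ε i) →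
      γ = alpProd ε l →
      ∀ (q : ℕ) (a : ℕ → ℕ), (∀ i < q, a i < a (i + 1)) → a q ≤ l →
        ∃ Q ⊆ P, treeRank Q = alpProd (fun i => ε (a i)) q ∧
          ∀ s ∈ Q, ∀ t ∈ Q, s < t →
            sep P ε s t = a (sep Q (fun i => ε (a i)) s t)) :=
  statement17_general γ hγ P hWF hrank
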